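/- arXiv:2508.00865 — 4 statements merged into one kernel-verified Lean document; each statement's English description precedes it below -/
import Mathlib

section
/- Define the Hex board B_k as the graph with vertex set {1,…,k}² where z and z' are adjacent iff ‖z − z'‖_∞ = 1 and z, z' are comparable (z ≤ z' or z' ≤ z component-wise). If the vertices of B_k are partitioned into sets H and V, then either H contains a path of H-vertices connecting the East edge (z₁ = k) to the West edge (z₁ = 1), or V contains a path of V-vertices connecting the North edge (z₂ = k) to the South edge (z₂ = 1). -/
/-- Hex adjacency on ℤ²: ℓ∞-distance 1 and componentwise comparable. -/
def hexAdj (z w : ℤ × ℤ) : Prop :=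
  max |z.1 - w.1| |z.2 - w.2| = 1 ∧
    ((z.1 ≤ w.1 ∧ z.2 ≤ w.2) ∨ (w.1 ≤ z.1 ∧ w.2 ≤ z.2))

/-- The Hex board of size `k`: lattice points `(z₁, z₂)` with `1 ≤ zᵢ ≤ k`. -/
def hexBoard (k : ℤ) : Set (ℤ × ℤ) :=
  {z | 1 ≤ z.1 ∧ z.1 ≤ k ∧ 1 ≤ z.2 ∧ z.2 ≤ k}

/-- A path of pairwise-adjacent vertices lying in `S`, starting in `A` and ending in `B`. -/
def hexPath (S A B : Set (ℤ × ℤ)) : Prop :=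
  ∃ (n : ℕ) (p : Fin (n + 1) → ℤ × ℤ),
    (∀ i, p i ∈ S) ∧
    (∀ i : Fin n, hexAdj (p i.castSucc) (p i.succ)) ∧
    p 0 ∈ A ∧ p (Fin.last n) ∈ B

namespace HexProof

def isDir (d : ℤ × ℤ) : Prop :=
  d = (1,0) ∨ d = (0,1) ∨ d = (1,1) ∨ d = (-1,0) ∨ d = (0,-1) ∨ d = (-1,-1)

lemma hexAdj_iff {z w : ℤ × ℤ} : hexAdj z w ↔ isDir (w - z) := by
  unfold hexAdj isDir
  rw [le_antisymm_iff, max_le_iff, le_max_iff]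
  simp only [Prod.ext_iff, Prod.fst_sub, Prod.snd_sub, Int.abs_eq_natAbs]
  omega

def rot (d : ℤ × ℤ) : ℤ × ℤ := (d.1 - d.2, d.1)
def rot' (d : ℤ × ℤ) : ℤ × ℤ := (d.2, d.2 - d.1)

lemma isDir_rot {d : ℤ × ℤ} (h : isDir d) : isDir (rot d) := by
  unfold isDir at *; simp only [Prod.ext_iff, rot] at *; omega

lemma isDir_rot' {d : ℤ × ℤ} (h : isDir d) : isDir (rot' d) := by
  unfold isDir at *; simp only [Prod.ext_iff, rot'] at *; omega

lemma alg1 (h v : ℤ × ℤ) : v - (h + rot (v - h)) = rot' (v - h) := by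
  simp only [rot, rot', Prod.ext_iff, Prod.fst_sub, Prod.snd_sub, Prod.fst_add, Prod.snd_add]
  omega

lemma alg2 (h v : ℤ × ℤ) : (h + rot (v - h)) + rot' (v - (h + rot (v - h))) = h := by
  simp only [rot, rot', Prod.ext_iff, Prod.fst_sub, Prod.snd_sub, Prod.fst_add, Prod.snd_add]
  omega

lemma alg3 (h v : ℤ × ℤ) : h + rot' ((h + rot (v - h)) - h) = v := by
  simp only [rot, rot', Prod.ext_iff, Prod.fst_sub, Prod.snd_sub, Prod.fst_add, Prod.snd_add]
  omega

/-! ## The extended board and coloring -/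

def EE (k : ℤ) : Set (ℤ × ℤ) := {z | 0 ≤ z.1 ∧ z.1 ≤ k+1 ∧ 0 ≤ z.2 ∧ z.2 ≤ k+1}

def cH (k : ℤ) (H : Set (ℤ × ℤ)) (z : ℤ × ℤ) : Prop := z ∈ H ∨ z.1 = 0 ∨ z.1 = k+1

def SH (k : ℤ) (H : Set (ℤ × ℤ)) : Set (ℤ × ℤ) := {z | z ∈ EE k ∧ cH k H z}
def SV (k : ℤ) (H : Set (ℤ × ℤ)) : Set (ℤ × ℤ) := {z | z ∈ EE k ∧ ¬ cH k H z}

/-! ## ℕ-indexed paths -/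

def NPath (S : Set (ℤ × ℤ)) (n : ℕ) (p : ℕ → ℤ × ℤ) : Prop :=
  (∀ i, i ≤ n → p i ∈ S) ∧ (∀ i, i < n → hexAdj (p i) (p (i+1)))

def HConn (k : ℤ) (H : Set (ℤ × ℤ)) (z : ℤ × ℤ) : Prop :=
  ∃ n p, NPath (SH k H) n p ∧ (p 0).1 = 0 ∧ p n = z

def VConn (k : ℤ) (H : Set (ℤ × ℤ)) (z : ℤ × ℤ) : Prop :=
  ∃ n p, NPath (SV k H) n p ∧ (p 0).2 = 0 ∧ p n = z

lemma NPath_extend {S : Set (ℤ × ℤ)} {n p} (h : NPath S n p) {w : ℤ × ℤ}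
    (hw : w ∈ S) (hadj : hexAdj (p n) w) :
    NPath S (n+1) (fun i => if i ≤ n then p i else w) := by
  constructor
  · intro i hi
    by_cases hin : i ≤ n
    · simpa [hin] using h.1 i hin
    · simpa [hin] using hw
  · intro i hi
    by_cases hin : i < n
    · have h1 : i ≤ n := by omega
      have h2 : i + 1 ≤ n := by omega
      simpa [h1, h2] using h.2 i hin
    · have hieq : i = n := by omega
      subst hieq
      have h1 : i ≤ i := le_refl i
      have h2 : ¬ (i + 1 ≤ i) := by omega
      simpa [h1, h2] using hadj

lemma HConn_extend {k H z w} (h : HConn k H z) (hw : w ∈ SH k H) (hadj : hexAdj z w) :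
    HConn k H w := by
  obtain ⟨n, p, hp, h0, hn⟩ := h
  refine ⟨n+1, _, NPath_extend hp hw (hn ▸ hadj), ?_, ?_⟩
  · simpa using h0
  · simp

lemma VConn_extend {k H z w} (h : VConn k H z) (hw : w ∈ SV k H) (hadj : hexAdj z w) :
    VConn k H w := by
  obtain ⟨n, p, hp, h0, hn⟩ := h
  refine ⟨n+1, _, NPath_extend hp hw (hn ▸ hadj), ?_, ?_⟩
  · simpa using h0
  · simp

/-! ## The walk -/

open Classical in
noncomputable def step (k : ℤ) (H : Set (ℤ × ℤ)) (s : (ℤ × ℤ) × (ℤ × ℤ)) :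
    Option ((ℤ × ℤ) × (ℤ × ℤ)) :=
  if s.1 + rot (s.2 - s.1) ∈ EE k then
    (if cH k H (s.1 + rot (s.2 - s.1)) then some (s.1 + rot (s.2 - s.1), s.2)
     else some (s.1, s.1 + rot (s.2 - s.1)))
  else none

open Classical in
noncomputable def back (k : ℤ) (H : Set (ℤ × ℤ)) (s : (ℤ × ℤ) × (ℤ × ℤ)) :
    Option ((ℤ × ℤ) × (ℤ × ℤ)) :=
  if s.1 + rot' (s.2 - s.1) ∈ EE k then
    (if cH k H (s.1 + rot' (s.2 - s.1)) then some (s.1 + rot' (s.2 - s.1), s.2)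
     else some (s.1, s.1 + rot' (s.2 - s.1)))
  else none

def Inv (k : ℤ) (H : Set (ℤ × ℤ)) (s : (ℤ × ℤ) × (ℤ × ℤ)) : Prop :=
  s.1 ∈ EE k ∧ s.2 ∈ EE k ∧ cH k H s.1 ∧ ¬ cH k H s.2 ∧ isDir (s.2 - s.1) ∧
    HConn k H s.1 ∧ VConn k H s.2

lemma isDir_neg {d : ℤ × ℤ} (h : isDir d) : isDir (-d) := by
  unfold isDir at *
  simp only [Prod.ext_iff, Prod.fst_neg, Prod.snd_neg] at *
  omega

lemma step_some {k H s t} (hInv : Inv k H s) (h : step k H s = some t) :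
    Inv k H t ∧ back k H t = some s := by
  classical
  obtain ⟨h1, h2, h3, h4, h5, h6, h7⟩ := hInv
  obtain ⟨h', v⟩ := s
  simp only at h1 h2 h3 h4 h5 h6 h7
  unfold step at h
  simp only at h
  split_ifs at h with hwE hcw
  · -- new H vertex w = h' + rot (v - h')
    obtain rfl : (h' + rot (v - h'), v) = t := Option.some.inj h
    have hdir : isDir (h' + rot (v - h') - h') := by
      rw [add_sub_cancel_left]; exact isDir_rot h5
    refine ⟨⟨hwE, h2, hcw, h4, ?_, ?_, h7⟩, ?_⟩
    · show isDir (v - (h' + rot (v - h')))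
      rw [alg1]; exact isDir_rot' h5
    · exact HConn_extend h6 ⟨hwE, hcw⟩ (hexAdj_iff.mpr hdir)
    · unfold back
      simp only
      rw [alg2, if_pos h1, if_pos h3]
  · -- new V vertex w
    obtain rfl : (h', h' + rot (v - h')) = t := Option.some.inj h
    have hdir : isDir (h' + rot (v - h') - h') := by
      rw [add_sub_cancel_left]; exact isDir_rot h5
    have hadjv : hexAdj v (h' + rot (v - h')) := by
      rw [hexAdj_iff, show h' + rot (v - h') - v = -(v - (h' + rot (v - h'))) from (neg_sub _ _).symm, alg1]
      exact isDir_neg (isDir_rot' h5)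
    refine ⟨⟨h1, hwE, h3, hcw, hdir, h6, ?_⟩, ?_⟩
    · exact VConn_extend h7 ⟨hwE, hcw⟩ hadjv
    · unfold back
      simp only
      rw [alg3, if_pos h2, if_neg h4]

lemma step_none {k H s} (hInv : Inv k H s) (h : step k H s = none) :
    s.1 + rot (s.2 - s.1) ∉ EE k := by
  classical
  unfold step at h
  split_ifs at h with hwE hcw <;> simp_all

/-! ## Generic reversible-walk termination -/

lemma orbit_terminates {α : Type} (f g : α → Option α) (P : α → Prop)
    (T : Set α) (hT : T.Finite) (hPT : ∀ a, P a → a ∈ T)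
    (hpres : ∀ a b, P a → f a = some b → P b ∧ g b = some a)
    (a₀ : α) (hP0 : P a₀) (hg0 : g a₀ = none) :
    ∃ a, P a ∧ f a = none := by
  classical
  set o : ℕ → Option α := fun n => (fun x => Option.bind x f)^[n] (some a₀) with ho
  have ho0 : o 0 = some a₀ := rfl
  have hosucc : ∀ n, o (n+1) = Option.bind (o n) f := by
    intro n; simp only [ho]; rw [Function.iterate_succ_apply']
  have hPon : ∀ n a, o n = some a → P a := by
    intro n
    induction n with
    | zero => intro a ha; rw [ho0] at ha; cases ha; exact hP0
    | succ n ih =>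
      intro a ha
      rw [hosucc] at ha
      obtain ⟨b, hb, hfb⟩ := Option.bind_eq_some_iff.mp ha
      exact (hpres b a (ih b hb) hfb).1
  by_cases hterm : ∃ n, o n = none
  · have hne : Nat.find hterm ≠ 0 := by
      intro h0
      have := Nat.find_spec hterm
      rw [h0, ho0] at this
      exact Option.some_ne_none _ this
    have hmin := Nat.find_min hterm (show Nat.find hterm - 1 < Nat.find hterm by omega)
    obtain ⟨a, ha⟩ := Option.ne_none_iff_exists'.mp hmin
    have hfan : f a = none := by
      have hspec := Nat.find_spec hterm
      rw [show Nat.find hterm = (Nat.find hterm - 1) + 1 by omega, hosucc, ha] at hspec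
      exact hspec
    exact ⟨a, hPon _ _ ha, hfan⟩
  · exfalso
    push_neg at hterm
    have hsome : ∀ n, (o n).isSome := fun n => Option.ne_none_iff_isSome.mp (hterm n)
    have inj : ∀ n m a, o n = some a → o m = some a → n = m := by
      intro n
      induction n with
      | zero =>
        intro m a h0 hm
        cases m with
        | zero => rfl
        | succ m =>
          exfalso
          rw [ho0] at h0
          cases h0
          rw [hosucc] at hm
          obtain ⟨b, hb, hfb⟩ := Option.bind_eq_some_iff.mp hm
          have := (hpres b a₀ (hPon m b hb) hfb).2
          rw [hg0] at this
          exact Option.some_ne_none _ this.symm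
      | succ n ih =>
        intro m a hn hm
        cases m with
        | zero =>
          exfalso
          rw [ho0] at hm
          cases hm
          rw [hosucc] at hn
          obtain ⟨b, hb, hfb⟩ := Option.bind_eq_some_iff.mp hn
          have := (hpres b a₀ (hPon n b hb) hfb).2
          rw [hg0] at this
          exact Option.some_ne_none _ this.symm
        | succ m =>
          rw [hosucc] at hn hm
          obtain ⟨b, hb, hfb⟩ := Option.bind_eq_some_iff.mp hn
          obtain ⟨c, hc, hfc⟩ := Option.bind_eq_some_iff.mp hm
          have h1 := (hpres b a (hPon n b hb) hfb).2
          have h2 := (hpres c a (hPon m c hc) hfc).2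
          rw [h1] at h2
          cases Option.some.inj h2
          exact congrArg Nat.succ (ih m b hb hc)
    haveI : Finite T := hT.to_subtype
    obtain ⟨m, n, hmn, he⟩ := Finite.exists_ne_map_eq_of_infinite
      (fun n : ℕ => (⟨(o n).get (hsome n),
        hPT _ (hPon n _ (Option.some_get (hsome n)).symm)⟩ : T))
    apply hmn
    have h1 : o m = some ((o m).get (hsome m)) := (Option.some_get (hsome m)).symm
    have h2 : o n = some ((o n).get (hsome n)) := (Option.some_get (hsome n)).symm
    have : ((o m).get (hsome m)) = ((o n).get (hsome n)) := congrArg Subtype.val he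
    rw [this] at h1
    exact inj m n _ h1 h2

/-! ## Finiteness -/

lemma EE_finite (k : ℤ) : (EE k).Finite := by
  apply Set.Finite.subset (Set.finite_Icc ((0:ℤ), (0:ℤ)) (k+1, k+1))
  intro z hz
  obtain ⟨a, b, c, d⟩ := hz
  simp only [Set.mem_Icc, Prod.le_def]
  exact ⟨⟨a, c⟩, b, d⟩

/-! ## Terminal classification -/

lemma terminal_classify {k : ℤ} (hk : 1 ≤ k) {H : Set (ℤ × ℤ)}
    (hH : H ⊆ hexBoard k) {s} (hInv : Inv k H s) (h : step k H s = none) :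
    s.1.1 = k + 1 ∨ s.2.2 = k + 1 := by
  have hw := step_none hInv h
  obtain ⟨h1, h2, h3, h4, h5, _, _⟩ := hInv
  obtain ⟨h', v⟩ := s
  simp only at h1 h2 h3 h4 h5 hw ⊢
  obtain ⟨e1, e2, e3, e4⟩ := h1
  obtain ⟨f1, f2, f3, f4⟩ := h2
  have hv1 : v.1 ≠ 0 ∧ v.1 ≠ k + 1 := by
    constructor <;> intro hc <;> exact h4 (Or.inr (by omega))
  have hw' : h'.1 + ((v.1 - h'.1) - (v.2 - h'.2)) < 0 ∨
      h'.1 + ((v.1 - h'.1) - (v.2 - h'.2)) > k + 1 ∨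
      h'.2 + (v.1 - h'.1) < 0 ∨ h'.2 + (v.1 - h'.1) > k + 1 := by
    by_contra hc
    push_neg at hc
    apply hw
    refine ⟨?_, ?_, ?_, ?_⟩ <;>
      simp only [rot, Prod.fst_add, Prod.snd_add, Prod.fst_sub, Prod.snd_sub] <;> omega
  have hdir : (v.1 - h'.1 = 1 ∧ v.2 - h'.2 = 0) ∨ (v.1 - h'.1 = 0 ∧ v.2 - h'.2 = 1) ∨
      (v.1 - h'.1 = 1 ∧ v.2 - h'.2 = 1) ∨ (v.1 - h'.1 = -1 ∧ v.2 - h'.2 = 0) ∨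
      (v.1 - h'.1 = 0 ∧ v.2 - h'.2 = -1) ∨ (v.1 - h'.1 = -1 ∧ v.2 - h'.2 = -1) := by
    simpa only [isDir, Prod.ext_iff, Prod.fst_sub, Prod.snd_sub] using h5
  rcases h3 with hm | hb | hb
  · have := hH hm
    obtain ⟨b1, b2, b3, b4⟩ := this
    omega
  · omega
  · omega

/-! ## From ℕ-paths to hexPaths -/

lemma hexPath_of_NPath {S A B : Set (ℤ × ℤ)} {n : ℕ} {p : ℕ → ℤ × ℤ}
    (h : NPath S n p) (hA : p 0 ∈ A) (hB : p n ∈ B) : hexPath S A B := by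
  refine ⟨n, fun i => p i.val, fun i => h.1 i.val (by omega), fun i => ?_, ?_, ?_⟩
  · have := h.2 i.val i.isLt
    simpa [Fin.coe_castSucc, Fin.val_succ] using this
  · simpa using hA
  · simpa [Fin.val_last] using hB

/-! ## Cropping an extended path to a board path -/

lemma crop {k : ℤ} (hk : 1 ≤ k) {S W : Set (ℤ × ℤ)} {f : ℤ × ℤ → ℤ} {n : ℕ} {p : ℕ → ℤ × ℤ}
    (hpath : NPath S n p)
    (hadj : ∀ z w, hexAdj z w → f z ≤ f w + 1 ∧ f w ≤ f z + 1)
    (h0 : ∀ z ∈ S, 0 ≤ f z)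
    (hW : ∀ z ∈ S, 1 ≤ f z → f z ≤ k → z ∈ W)
    (hs : f (p 0) = 0) (he : f (p n) = k + 1) :
    hexPath W {z | f z = 1} {z | f z = k} := by
  classical
  have hex : ∃ j, j ≤ n ∧ k + 1 ≤ f (p j) := ⟨n, le_refl n, by omega⟩
  set j := Nat.find hex with hj
  obtain ⟨hjn, hjval⟩ := Nat.find_spec hex
  rw [← hj] at hjn hjval
  have hjmin : ∀ t, t < j → t ≤ n → f (p t) ≤ k := by
    intro t ht htn
    have := Nat.find_min hex ht
    push_neg at this
    have := this htn
    omega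
  have hj0 : j ≠ 0 := by
    intro hc
    rw [hc] at hjval
    omega
  set Q : ℕ → Prop := fun i => f (p i) ≤ 0 with hQ
  set i := Nat.findGreatest Q (j - 1) with hi
  have hQ0 : Q 0 := by simp [hQ, hs]
  have hQi : Q i := Nat.findGreatest_spec (Nat.zero_le _) hQ0
  have hij : i ≤ j - 1 := Nat.findGreatest_le _
  have hgr : ∀ t, i < t → t ≤ j - 1 → ¬ Q t := fun t ht htj =>
    Nat.findGreatest_is_greatest ht htj
  -- basic bounds
  have hpi0 : 0 ≤ f (p i) := h0 _ (hpath.1 i (by omega))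
  have hfpi : f (p i) = 0 := by
    have := hQi
    simp only [hQ] at this
    omega
  have hij2 : i + 2 ≤ j := by
    by_contra hc
    have hji : j = i + 1 := by omega
    have hadji := hadj _ _ (hpath.2 i (by omega))
    rw [← hji] at hadji
    omega
  -- the cropped path
  refine hexPath_of_NPath (S := W) (n := j - 1 - (i+1)) (p := fun t => p (i + 1 + t)) ⟨?_, ?_⟩ ?_ ?_
  · intro t ht
    have hb1 : i < i + 1 + t := by omega
    have hb2 : i + 1 + t ≤ j - 1 := by omega
    have hb3 : i + 1 + t ≤ n := by omega
    have hge := hgr _ hb1 hb2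
    simp only [hQ] at hge
    push_neg at hge
    exact hW _ (hpath.1 _ hb3) hge (hjmin _ (by omega) hb3)
  · intro t ht
    exact hpath.2 _ (by omega)
  · show f (p (i + 1 + 0)) = 1
    have hadji := hadj _ _ (hpath.2 i (by omega))
    have hge := hgr (i+1) (by omega) (by omega)
    simp only [hQ] at hge
    push_neg at hge
    simp only [Nat.add_zero]
    omega
  · show f (p (i + 1 + (j - 1 - (i+1)))) = k
    have heq : i + 1 + (j - 1 - (i+1)) = j - 1 := by omega
    rw [heq]
    have hadjj := hadj _ _ (hpath.2 (j-1) (by omega))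
    rw [show j - 1 + 1 = j by omega] at hadjj
    have := hjmin (j-1) (by omega) (by omega)
    omega

lemma hexAdj_bnd {z w : ℤ × ℤ} (h : hexAdj z w) :
    (z.1 ≤ w.1 + 1 ∧ w.1 ≤ z.1 + 1) ∧ (z.2 ≤ w.2 + 1 ∧ w.2 ≤ z.2 + 1) := by
  have := hexAdj_iff.mp h
  simp only [isDir, Prod.ext_iff, Prod.fst_sub, Prod.snd_sub] at this
  omega

end HexProof

open HexProof in
/-- The Hex theorem: if the board `B_k` is partitioned into `H` and `V`, then either
`H` contains a path from the West edge (`z₁ = 1`) to the East edge (`z₁ = k`), or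
`V` contains a path from the South edge (`z₂ = 1`) to the North edge (`z₂ = k`). -/
theorem stmt_8 (k : ℤ) (hk : 1 ≤ k) (H V : Set (ℤ × ℤ))
    (hHV : H ∪ V = hexBoard k) (hdisj : Disjoint H V) :
    hexPath H {z | z.1 = 1} {z | z.1 = k} ∨
    hexPath V {z | z.2 = 1} {z | z.2 = k} := by
  classical
  have hH : H ⊆ hexBoard k := by
    intro z hz
    rw [← hHV]
    exact Set.mem_union_left _ hz
  have hEE1 : (((0:ℤ),(0:ℤ)) : ℤ × ℤ) ∈ EE k := by
    refine ⟨le_refl _, by omega, le_refl _, by omega⟩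
  have hEE2 : (((1:ℤ),(0:ℤ)) : ℤ × ℤ) ∈ EE k := by
    refine ⟨by norm_num, by omega, le_refl _, by omega⟩
  have hcH1 : cH k H ((0:ℤ),(0:ℤ)) := Or.inr (Or.inl rfl)
  have hcH2 : ¬ cH k H ((1:ℤ),(0:ℤ)) := by
    rintro (hm | hb | hb)
    · have := hH hm
      obtain ⟨_, _, hb3, _⟩ := this
      norm_num at hb3
    · norm_num at hb
    · omega
  have hInv0 : Inv k H (((0:ℤ),(0:ℤ)), ((1:ℤ),(0:ℤ))) := by
    refine ⟨hEE1, hEE2, hcH1, hcH2, ?_, ?_, ?_⟩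
    · left
      simp [Prod.ext_iff]
    · exact ⟨0, fun _ => ((0:ℤ),(0:ℤ)),
        ⟨fun i _ => ⟨hEE1, hcH1⟩, fun i hi => absurd hi (by omega)⟩, rfl, rfl⟩
    · exact ⟨0, fun _ => ((1:ℤ),(0:ℤ)),
        ⟨fun i _ => ⟨hEE2, hcH2⟩, fun i hi => absurd hi (by omega)⟩, rfl, rfl⟩
  have hback0 : back k H (((0:ℤ),(0:ℤ)), ((1:ℤ),(0:ℤ))) = none := by
    unfold back
    rw [if_neg]
    intro hmem
    obtain ⟨_, _, hc, _⟩ := hmem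
    simp only [rot', Prod.fst_add, Prod.snd_add, Prod.fst_sub, Prod.snd_sub] at hc
    norm_num at hc
  obtain ⟨s, hs, hnone⟩ := orbit_terminates (step k H) (back k H) (Inv k H)
    ((EE k) ×ˢ (EE k)) ((EE_finite k).prod (EE_finite k))
    (fun a ha => Set.mem_prod.mpr ⟨ha.1, ha.2.1⟩)
    (fun a b ha hf => step_some ha hf)
    (((0:ℤ),(0:ℤ)), ((1:ℤ),(0:ℤ))) hInv0 hback0
  rcases terminal_classify hk hH hs hnone with hcase | hcase
  · -- H wins
    left
    obtain ⟨n, p, hp, hp0, hpn⟩ := hs.2.2.2.2.2.1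
    refine crop hk (f := fun z => z.1) hp
      (fun z w hzw => (hexAdj_bnd hzw).1) (fun z hz => hz.1.1) ?_ hp0 ?_
    · intro z hz hz1 hz2
      rcases hz.2 with hm | hb | hb
      · exact hm
      · omega
      · omega
    · rw [hpn]
      exact hcase
  · -- V wins
    right
    obtain ⟨n, p, hp, hp0, hpn⟩ := hs.2.2.2.2.2.2
    refine crop hk (f := fun z => z.2) hp
      (fun z w hzw => (hexAdj_bnd hzw).2) (fun z hz => hz.1.2.2.1) ?_ hp0 ?_
    · intro z hz hz1 hz2
      obtain ⟨⟨b1, b2, b3, b4⟩, hnc⟩ := hz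
      have hzH : z ∉ H := fun hm => hnc (Or.inl hm)
      have hz1' : 1 ≤ z.1 ∧ z.1 ≤ k := by
        constructor
        · rcases lt_or_ge 0 z.1 with h | h
          · omega
          · exact absurd (by omega : z.1 = 0) (fun hc => hnc (Or.inr (Or.inl hc)))
        · rcases lt_or_ge z.1 (k+1) with h | h
          · omega
          · exact absurd (by omega : z.1 = k+1) (fun hc => hnc (Or.inr (Or.inr hc)))
      have hzb : z ∈ hexBoard k := ⟨hz1'.1, hz1'.2, hz1, hz2⟩
      rw [← hHV] at hzb
      rcases hzb with hm | hm
      · exact absurd hm hzH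
      · exact hm
    · rw [hpn]
      exact hcase
end

section
/- In the Hex board B_k (vertices {1,…,k}², adjacency: ℓ∞-distance 1 and comparable), it is impossible for both a horizontal H-path from West to East and a vertical V-path from North to South to exist when H and V are disjoint sets of vertices. -/
namespace HexAux

/-- Parity indicator: the segment `a–b` crosses the horizontal ray
`{(x, z₂ + ½) : x < z₁}`. -/
def cross (a b z : ℤ × ℤ) : ZMod 2 :=
  if ((a.2 = z.2 ∧ b.2 = z.2 + 1) ∨ (a.2 = z.2 + 1 ∧ b.2 = z.2)) ∧ a.1 + b.1 < 2 * z.1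
  then 1 else 0

def tau (c x : ℤ) (v : ℤ × ℤ) : ZMod 2 := if v.2 = c ∧ v.1 < x then 1 else 0

def beta (c : ℤ) (v : ℤ × ℤ) : ZMod 2 := if v.2 ≤ c then 1 else 0

/-- Side of `z` w.r.t. the vertical path `q` extended by an upward ray at its top end. -/
def sig (q : ℕ → ℤ × ℤ) (m : ℕ) (k : ℤ) (z : ℤ × ℤ) : ZMod 2 :=
  (∑ j ∈ Finset.range m, cross (q j) (q (j + 1)) z) +
    (if z.2 = k ∧ (q m).1 < z.1 then 1 else 0)

lemma zmod2_solve : ∀ a b c d e : ZMod 2, a + b = e → c + d + e = 0 → a + c = b + d := by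
  decide

lemma hexAdj_facts {a b : ℤ × ℤ} (h : hexAdj a b) :
    a.1 - b.1 ≤ 1 ∧ b.1 - a.1 ≤ 1 ∧ a.2 - b.2 ≤ 1 ∧ b.2 - a.2 ≤ 1 ∧
      ((a.1 ≤ b.1 ∧ a.2 ≤ b.2) ∨ (b.1 ≤ a.1 ∧ b.2 ≤ a.2)) := by
  obtain ⟨h1, h2⟩ := h
  have hx : |a.1 - b.1| ≤ 1 := h1 ▸ le_max_left _ _
  have hy : |a.2 - b.2| ≤ 1 := h1 ▸ le_max_right _ _
  rw [abs_le] at hx hy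
  exact ⟨by omega, by omega, by omega, by omega, h2⟩

lemma step_h {a b z w : ℤ × ℤ} (hab : hexAdj a b) (haz : a ≠ z) (hbz : b ≠ z)
    (hw1 : w.1 = z.1 + 1) (hw2 : w.2 = z.2) :
    cross a b z = cross a b w := by
  obtain ⟨f1, f2, f3, f4, f5⟩ := hexAdj_facts hab
  rw [Ne, Prod.ext_iff] at haz hbz
  unfold cross
  split_ifs <;> first | rfl | (exfalso; omega)

lemma step_v {a b z w : ℤ × ℤ} (hab : hexAdj a b) (haz : a ≠ z) (hbz : b ≠ z)
    (haw : a ≠ w) (hbw : b ≠ w) (hw1 : w.1 = z.1) (hw2 : w.2 = z.2 + 1) :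
    cross a b z + cross a b w = tau (z.2 + 1) z.1 b - tau (z.2 + 1) z.1 a := by
  have hsub : ∀ x y : ZMod 2, x - y = x + y := by decide
  rw [hsub]
  obtain ⟨f1, f2, f3, f4, f5⟩ := hexAdj_facts hab
  rw [Ne, Prod.ext_iff] at haz hbz haw hbw
  unfold cross tau
  split_ifs <;> first | decide | (exfalso; omega)

lemma step_d {a b z w : ℤ × ℤ} (hab : hexAdj a b) (haz : a ≠ z) (hbz : b ≠ z)
    (haw : a ≠ w) (hbw : b ≠ w) (hw1 : w.1 = z.1 + 1) (hw2 : w.2 = z.2 + 1) :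
    cross a b z + cross a b w = tau (z.2 + 1) (z.1 + 1) b - tau (z.2 + 1) (z.1 + 1) a := by
  have hsub : ∀ x y : ZMod 2, x - y = x + y := by decide
  rw [hsub]
  obtain ⟨f1, f2, f3, f4, f5⟩ := hexAdj_facts hab
  rw [Ne, Prod.ext_iff] at haz hbz haw hbw
  unfold cross tau
  split_ifs <;> first | decide | (exfalso; omega)

lemma step_e {a b z : ℤ × ℤ} {k : ℤ} (hab : hexAdj a b) (haz : a ≠ z) (hbz : b ≠ z)
    (hak : a.1 ≤ k) (hbk : b.1 ≤ k) (hzk : z.1 = k) :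
    cross a b z = beta z.2 b - beta z.2 a := by
  have hsub : ∀ x y : ZMod 2, x - y = x + y := by decide
  rw [hsub]
  obtain ⟨f1, f2, f3, f4, f5⟩ := hexAdj_facts hab
  rw [Ne, Prod.ext_iff] at haz hbz
  unfold cross beta
  split_ifs <;> first | decide | (exfalso; omega)

section PathLemmas

variable (q : ℕ → ℤ × ℤ) (m : ℕ) (k : ℤ)

/-- West edge: side is 0. -/
lemma sig_start (z : ℤ × ℤ)
    (hqb : ∀ j, j ≤ m → q j ∈ hexBoard k) (hz1 : z.1 = 1) :
    sig q m k z = 0 := by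
  unfold sig
  have h1 : ∀ j ∈ Finset.range m, cross (q j) (q (j + 1)) z = 0 := by
    intro j hj
    rw [Finset.mem_range] at hj
    have ha := hqb j (by omega); have hb := hqb (j + 1) (by omega)
    simp only [hexBoard, Set.mem_setOf_eq] at ha hb
    unfold cross
    rw [if_neg]; omega
  rw [Finset.sum_eq_zero h1, if_neg, add_zero]
  have := hqb m le_rfl
  simp only [hexBoard, Set.mem_setOf_eq] at this
  omega

/-- East edge: side is 1. -/
lemma sig_end (z : ℤ × ℤ)
    (hq : ∀ j, j < m → hexAdj (q j) (q (j + 1)))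
    (hqb : ∀ j, j ≤ m → q j ∈ hexBoard k)
    (hq0 : (q 0).2 = 1) (hqm : (q m).2 = k)
    (hnez : ∀ j, j ≤ m → q j ≠ z)
    (hz1 : z.1 = k) (hz2a : 1 ≤ z.2) (hz2b : z.2 ≤ k) :
    sig q m k z = 1 := by
  have key : ∀ j ∈ Finset.range m, cross (q j) (q (j + 1)) z
      = beta z.2 (q (j + 1)) - beta z.2 (q j) := by
    intro j hj
    rw [Finset.mem_range] at hj
    have ha := hqb j (by omega); have hb := hqb (j + 1) (by omega)
    simp only [hexBoard, Set.mem_setOf_eq] at ha hb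
    exact step_e (hq j hj) (hnez j (by omega)) (hnez (j + 1) (by omega)) ha.2.1 hb.2.1 hz1
  have hsum : (∑ j ∈ Finset.range m, cross (q j) (q (j + 1)) z)
      = beta z.2 (q m) - beta z.2 (q 0) := by
    rw [Finset.sum_congr rfl key]
    exact Finset.sum_range_sub (fun j => beta z.2 (q j)) m
  have h0 : beta z.2 (q 0) = 1 := by unfold beta; rw [if_pos]; omega
  unfold sig
  rw [hsum, h0]
  have hqmz := hnez m le_rfl
  rw [Ne, Prod.ext_iff] at hqmz
  have hqmb := hqb m le_rfl
  simp only [hexBoard, Set.mem_setOf_eq] at hqmb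
  by_cases hc : z.2 = k
  · have hm : beta z.2 (q m) = 1 := by unfold beta; rw [if_pos]; omega
    rw [hm, if_pos ⟨hc, by omega⟩]; decide
  · have hm : beta z.2 (q m) = 0 := by unfold beta; rw [if_neg]; omega
    rw [hm, if_neg (by omega)]; decide

/-- Invariance of the side along a hex edge avoiding the vertical path. -/
lemma sig_adj (z w : ℤ × ℤ)
    (hq : ∀ j, j < m → hexAdj (q j) (q (j + 1)))
    (hq0 : (q 0).2 = 1) (hqm : (q m).2 = k)
    (hz : z ∈ hexBoard k) (hw : w ∈ hexBoard k)
    (hzw : hexAdj z w)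
    (hnez : ∀ j, j ≤ m → q j ≠ z) (hnew : ∀ j, j ≤ m → q j ≠ w) :
    sig q m k z = sig q m k w := by
  simp only [hexBoard, Set.mem_setOf_eq] at hz hw
  -- the horizontal-step case
  have caseH : ∀ z' w' : ℤ × ℤ, z'.2 ≤ k →
      (∀ j, j ≤ m → q j ≠ z') → (w'.1 = z'.1 + 1 ∧ w'.2 = z'.2) →
      sig q m k z' = sig q m k w' := by
    intro z' w' hz'k hnez' ⟨hw1, hw2⟩
    unfold sig
    have hs : ∀ j ∈ Finset.range m, cross (q j) (q (j + 1)) z' = cross (q j) (q (j + 1)) w' := by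
      intro j hj
      rw [Finset.mem_range] at hj
      exact step_h (hq j hj) (hnez' j (by omega)) (hnez' (j + 1) (by omega)) hw1 hw2
    rw [Finset.sum_congr rfl hs]
    congr 1
    have hqmz := hnez' m le_rfl
    rw [Ne, Prod.ext_iff] at hqmz
    split_ifs <;> first | rfl | (exfalso; omega)
  -- the vertical-step case
  have caseV : ∀ z' w' : ℤ × ℤ, w'.2 ≤ k → 1 ≤ z'.2 →
      (∀ j, j ≤ m → q j ≠ z') → (∀ j, j ≤ m → q j ≠ w') →
      (w'.1 = z'.1 ∧ w'.2 = z'.2 + 1) →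
      sig q m k z' = sig q m k w' := by
    intro z' w' hw'k hz'2 hnez' hnew' ⟨hw1, hw2⟩
    have key : ∀ j ∈ Finset.range m, cross (q j) (q (j + 1)) z' + cross (q j) (q (j + 1)) w'
        = tau (z'.2 + 1) z'.1 (q (j + 1)) - tau (z'.2 + 1) z'.1 (q j) := by
      intro j hj
      rw [Finset.mem_range] at hj
      exact step_v (hq j hj) (hnez' j (by omega)) (hnez' (j + 1) (by omega))
        (hnew' j (by omega)) (hnew' (j + 1) (by omega)) hw1 hw2
    have hsum : (∑ j ∈ Finset.range m, cross (q j) (q (j + 1)) z')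
        + (∑ j ∈ Finset.range m, cross (q j) (q (j + 1)) w')
        = tau (z'.2 + 1) z'.1 (q m) - tau (z'.2 + 1) z'.1 (q 0) := by
      rw [← Finset.sum_add_distrib, Finset.sum_congr rfl key]
      exact Finset.sum_range_sub (fun j => tau (z'.2 + 1) z'.1 (q j)) m
    have h0 : tau (z'.2 + 1) z'.1 (q 0) = 0 := by
      unfold tau; rw [if_neg]; omega
    rw [h0, sub_zero] at hsum
    have hray : (if z'.2 = k ∧ (q m).1 < z'.1 then (1 : ZMod 2) else 0)
        + (if w'.2 = k ∧ (q m).1 < w'.1 then (1 : ZMod 2) else 0)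
        + tau (z'.2 + 1) z'.1 (q m) = 0 := by
      unfold tau
      split_ifs <;> first | decide | (exfalso; omega)
    exact zmod2_solve _ _ _ _ _ hsum hray
  -- the diagonal-step case
  have caseD : ∀ z' w' : ℤ × ℤ, w'.2 ≤ k → 1 ≤ z'.2 →
      (∀ j, j ≤ m → q j ≠ z') → (∀ j, j ≤ m → q j ≠ w') →
      (w'.1 = z'.1 + 1 ∧ w'.2 = z'.2 + 1) →
      sig q m k z' = sig q m k w' := by
    intro z' w' hw'k hz'2 hnez' hnew' ⟨hw1, hw2⟩
    have key : ∀ j ∈ Finset.range m, cross (q j) (q (j + 1)) z' + cross (q j) (q (j + 1)) w'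
        = tau (z'.2 + 1) (z'.1 + 1) (q (j + 1)) - tau (z'.2 + 1) (z'.1 + 1) (q j) := by
      intro j hj
      rw [Finset.mem_range] at hj
      exact step_d (hq j hj) (hnez' j (by omega)) (hnez' (j + 1) (by omega))
        (hnew' j (by omega)) (hnew' (j + 1) (by omega)) hw1 hw2
    have hsum : (∑ j ∈ Finset.range m, cross (q j) (q (j + 1)) z')
        + (∑ j ∈ Finset.range m, cross (q j) (q (j + 1)) w')
        = tau (z'.2 + 1) (z'.1 + 1) (q m) - tau (z'.2 + 1) (z'.1 + 1) (q 0) := by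
      rw [← Finset.sum_add_distrib, Finset.sum_congr rfl key]
      exact Finset.sum_range_sub (fun j => tau (z'.2 + 1) (z'.1 + 1) (q j)) m
    have h0 : tau (z'.2 + 1) (z'.1 + 1) (q 0) = 0 := by
      unfold tau; rw [if_neg]; omega
    rw [h0, sub_zero] at hsum
    have hray : (if z'.2 = k ∧ (q m).1 < z'.1 then (1 : ZMod 2) else 0)
        + (if w'.2 = k ∧ (q m).1 < w'.1 then (1 : ZMod 2) else 0)
        + tau (z'.2 + 1) (z'.1 + 1) (q m) = 0 := by
      unfold tau
      split_ifs <;> first | decide | (exfalso; omega)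
    exact zmod2_solve _ _ _ _ _ hsum hray
  obtain ⟨f1, f2, f3, f4, f5⟩ := hexAdj_facts hzw
  have hcase : (w.1 = z.1 ∧ w.2 = z.2) ∨
      (w.1 = z.1 + 1 ∧ w.2 = z.2) ∨ (z.1 = w.1 + 1 ∧ z.2 = w.2) ∨
      (w.1 = z.1 ∧ w.2 = z.2 + 1) ∨ (z.1 = w.1 ∧ z.2 = w.2 + 1) ∨
      (w.1 = z.1 + 1 ∧ w.2 = z.2 + 1) ∨ (z.1 = w.1 + 1 ∧ z.2 = w.2 + 1) := by omega
  rcases hcase with h | h | h | h | h | h | h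
  · have : z = w := Prod.ext h.1.symm h.2.symm
    rw [this]
  · exact caseH z w (by omega) hnez h
  · exact (caseH w z (by omega) hnew h).symm
  · exact caseV z w (by omega) (by omega) hnez hnew h
  · exact (caseV w z (by omega) (by omega) hnew hnez h).symm
  · exact caseD z w (by omega) (by omega) hnez hnew h
  · exact (caseD w z (by omega) (by omega) hnew hnez h).symm

end PathLemmas

end HexAux

/-- At most one winner in Hex: if `H` and `V` are disjoint sets of board vertices, it is
impossible that both an `H`-path joins West to East and a `V`-path joins South to North. -/
theorem stmt_9 (k : ℤ) (hk : 1 ≤ k) (H V : Set (ℤ × ℤ))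
    (hH : H ⊆ hexBoard k) (hV : V ⊆ hexBoard k) (hdisj : Disjoint H V) :
    ¬ (hexPath H {z | z.1 = 1} {z | z.1 = k} ∧
       hexPath V {z | z.2 = 1} {z | z.2 = k}) := by
  rintro ⟨⟨n, p, hpS, hpadj, hp0, hpl⟩, ⟨m, qq, hqS, hqadj, hq0, hql⟩⟩
  classical
  set P : ℕ → ℤ × ℤ := fun i => p ⟨min i n, Nat.lt_succ_of_le (min_le_right _ _)⟩ with hP
  set Q : ℕ → ℤ × ℤ := fun j => qq ⟨min j m, Nat.lt_succ_of_le (min_le_right _ _)⟩ with hQ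
  have hPmem : ∀ i, P i ∈ H := fun i => hpS _
  have hQmem : ∀ j, Q j ∈ V := fun j => hqS _
  have hP0 : P 0 = p 0 := by simp [hP]
  have hPn : P n = p (Fin.last n) := by simp [hP, Fin.last]
  have hQ0 : Q 0 = qq 0 := by simp [hQ]
  have hQm : Q m = qq (Fin.last m) := by simp [hQ, Fin.last]
  have hPadj : ∀ i, i < n → hexAdj (P i) (P (i + 1)) := by
    intro i hi
    have e1 : P i = p ((⟨i, hi⟩ : Fin n).castSucc) :=
      congrArg p (Fin.ext (by simp [Fin.coe_castSucc]; omega))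
    have e2 : P (i + 1) = p ((⟨i, hi⟩ : Fin n).succ) :=
      congrArg p (Fin.ext (by simp [Fin.val_succ]; omega))
    rw [e1, e2]
    exact hpadj ⟨i, hi⟩
  have hQadj : ∀ j, j < m → hexAdj (Q j) (Q (j + 1)) := by
    intro j hj
    have e1 : Q j = qq ((⟨j, hj⟩ : Fin m).castSucc) :=
      congrArg qq (Fin.ext (by simp [Fin.coe_castSucc]; omega))
    have e2 : Q (j + 1) = qq ((⟨j, hj⟩ : Fin m).succ) :=
      congrArg qq (Fin.ext (by simp [Fin.val_succ]; omega))
    rw [e1, e2]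
    exact hqadj ⟨j, hj⟩
  have hQb : ∀ j, j ≤ m → Q j ∈ hexBoard k := fun j _ => hV (hQmem j)
  have hQ02 : (Q 0).2 = 1 := by rw [hQ0]; exact hq0
  have hQm2 : (Q m).2 = k := by rw [hQm]; exact hql
  have hne : ∀ i, ∀ j, j ≤ m → Q j ≠ P i := by
    intro i j _ h
    exact Set.disjoint_left.mp hdisj (hPmem i) (h ▸ hQmem j)
  have hinv : ∀ i, i ≤ n → HexAux.sig Q m k (P i) = 0 := by
    intro i
    induction i with
    | zero =>
      intro _
      have h1 : (P 0).1 = 1 := by rw [hP0]; exact hp0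
      exact HexAux.sig_start Q m k (P 0) hQb h1
    | succ i ih =>
      intro hi
      have h := HexAux.sig_adj Q m k (P i) (P (i + 1)) hQadj hQ02 hQm2
        (hH (hPmem i)) (hH (hPmem (i + 1))) (hPadj i (by omega))
        (hne i) (hne (i + 1))
      rw [← h]
      exact ih (by omega)
  have hlast : HexAux.sig Q m k (P n) = 1 := by
    have hb := hH (hPmem n)
    simp only [hexBoard, Set.mem_setOf_eq] at hb
    refine HexAux.sig_end Q m k (P n) hQadj hQb hQ02 hQm2 (hne n) ?_ hb.2.2.1 hb.2.2.2
    rw [hPn]; exact hpl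
  rw [hinv n le_rfl] at hlast
  exact absurd hlast (by decide)
end

section
/- Let f : [0,1]² → [0,1]² be continuous. Then for every ε > 0 there exists x ∈ [0,1]² with ‖f(x) − x‖_∞ < ε. -/
def dd (a b : Fin 3) : ZMod 2 := if (a = 0 ∧ b = 1) ∨ (a = 1 ∧ b = 0) then 1 else 0

lemma dd_notrainbow (a b c : Fin 3) (h : ¬(a ≠ b ∧ b ≠ c ∧ a ≠ c)) :
    dd a b + dd b c + dd a c = 0 := by revert h; revert a b c; decide

lemma dd_zero_ne_one : ∀ a b : Fin 3, a ≠ 1 → b ≠ 1 → dd a b = 0 := by decide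

lemma dd_zero_ne_zero : ∀ a b : Fin 3, a ≠ 0 → b ≠ 0 → dd a b = 0 := by decide

lemma dd_split : ∀ a b : Fin 3, a ≠ 2 → b ≠ 2 →
    dd a b = (if a = 1 then (1 : ZMod 2) else 0) + (if b = 1 then 1 else 0) := by decide

lemma fin3_eq_one : ∀ a : Fin 3, a ≠ 0 → a ≠ 2 → a = 1 := by decide

lemma two_zero : (2 : ZMod 2) = 0 := rfl

lemma tel (g : ℕ → ZMod 2) (N : ℕ) :
    (∑ i ∈ Finset.range N, (g i + g (i+1))) = g 0 + g N := by
  induction N with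
  | zero => simp [CharTwo.add_self_eq_zero]
  | succ n ih =>
      rw [Finset.sum_range_succ, ih]; ring_nf; rw [two_zero]; ring

theorem sperner (N : ℕ) (hN : 1 ≤ N) (L : ℕ → ℕ → Fin 3)
    (hbot : ∀ i, i ≤ N → L i 0 ≠ 2)
    (hleft : ∀ j, j ≤ N → L 0 j ≠ 1)
    (hhyp : ∀ i j, i + j = N → L i j ≠ 0) :
    ∃ i j : ℕ, i + j + 1 ≤ N ∧
      ((L i j ≠ L (i+1) j ∧ L (i+1) j ≠ L i (j+1) ∧ L i j ≠ L i (j+1)) ∨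
       (i + j + 2 ≤ N ∧ L (i+1) j ≠ L i (j+1) ∧ L i (j+1) ≠ L (i+1) (j+1) ∧
         L (i+1) j ≠ L (i+1) (j+1))) := by
  by_contra hcon
  push_neg at hcon
  set dH : ℕ × ℕ → ZMod 2 := fun p => dd (L p.1 p.2) (L (p.1+1) p.2) with hdH
  set dV : ℕ × ℕ → ZMod 2 := fun p => dd (L p.1 p.2) (L p.1 (p.2+1)) with hdV
  set dD : ℕ × ℕ → ZMod 2 := fun p => dd (L (p.1+1) p.2) (L p.1 (p.2+1)) with hdD
  set s₁ : Finset (ℕ × ℕ) :=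
    (Finset.range N ×ˢ Finset.range N).filter (fun p => p.1 + p.2 + 1 ≤ N) with hs₁
  set s₂ : Finset (ℕ × ℕ) := s₁.filter (fun p => p.1 + p.2 + 2 ≤ N) with hs₂
  have mem₁ : ∀ p : ℕ × ℕ, p ∈ s₁ ↔ p.1 + p.2 + 1 ≤ N := by
    intro p
    simp only [hs₁, Finset.mem_filter, Finset.mem_product, Finset.mem_range]
    omega
  have mem₂ : ∀ p : ℕ × ℕ, p ∈ s₂ ↔ p.1 + p.2 + 2 ≤ N := by
    intro p
    simp only [hs₂, Finset.mem_filter, mem₁]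
    omega
  have hup : ∀ p ∈ s₁, dH p + dD p + dV p = 0 := by
    intro p hp
    have h := (hcon p.1 p.2 ((mem₁ p).1 hp)).1
    exact dd_notrainbow _ _ _ (fun hr => hr.2.2 (h hr.1 hr.2.1))
  have hdn : ∀ p ∈ s₂, dD p + dV (p.1+1, p.2) + dH (p.1, p.2+1) = 0 := by
    intro p hp
    have hm2 := (mem₂ p).1 hp
    have h := (hcon p.1 p.2 (by omega)).2 hm2
    have hz := dd_notrainbow (L (p.1+1) p.2) (L p.1 (p.2+1)) (L (p.1+1) (p.2+1))
      (fun hr => hr.2.2 (h hr.1 hr.2.1))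
    simp only [hdD, hdV, hdH]
    calc dd (L (p.1+1) p.2) (L p.1 (p.2+1)) + dd (L (p.1+1) p.2) (L (p.1+1) (p.2+1))
          + dd (L p.1 (p.2+1)) (L (p.1+1) (p.2+1))
        = dd (L (p.1+1) p.2) (L p.1 (p.2+1)) + dd (L p.1 (p.2+1)) (L (p.1+1) (p.2+1))
          + dd (L (p.1+1) p.2) (L (p.1+1) (p.2+1)) := by ring
      _ = 0 := hz
  have hS0 : (∑ p ∈ s₁, (dH p + dD p + dV p))
      + (∑ p ∈ s₂, (dD p + dV (p.1+1, p.2) + dH (p.1, p.2+1))) = 0 := by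
    rw [Finset.sum_congr rfl hup, Finset.sum_congr rfl hdn]; simp
  have hHre : (∑ p ∈ s₂, dH (p.1, p.2+1)) = ∑ p ∈ s₁.filter (fun p => p.2 ≠ 0), dH p := by
    apply Finset.sum_nbij' (i := fun p => (p.1, p.2+1)) (j := fun p => (p.1, p.2-1))
    · intro a ha
      have := (mem₂ a).1 ha
      simp only [Finset.mem_filter, mem₁]
      exact ⟨by omega, by omega⟩
    · intro a ha
      simp only [Finset.mem_filter, mem₁] at ha
      rw [mem₂]; omega
    · intro a _; rfl
    · intro a ha
      simp only [Finset.mem_filter, mem₁] at ha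
      ext <;> simp <;> omega
    · intro a _; rfl
  have hVre : (∑ p ∈ s₂, dV (p.1+1, p.2)) = ∑ p ∈ s₁.filter (fun p => p.1 ≠ 0), dV p := by
    apply Finset.sum_nbij' (i := fun p => (p.1+1, p.2)) (j := fun p => (p.1-1, p.2))
    · intro a ha
      have := (mem₂ a).1 ha
      simp only [Finset.mem_filter, mem₁]
      exact ⟨by omega, by omega⟩
    · intro a ha
      simp only [Finset.mem_filter, mem₁] at ha
      rw [mem₂]; omega
    · intro a _; rfl
    · intro a ha
      simp only [Finset.mem_filter, mem₁] at ha
      ext <;> simp <;> omega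
    · intro a _; rfl
  have hsplitH : (∑ p ∈ s₁, dH p)
      = (∑ p ∈ s₁.filter (fun p => p.2 ≠ 0), dH p)
        + ∑ p ∈ s₁.filter (fun p => p.2 = 0), dH p := by
    rw [add_comm, Finset.sum_filter_add_sum_filter_not]
  have hsplitV : (∑ p ∈ s₁, dV p)
      = (∑ p ∈ s₁.filter (fun p => p.1 ≠ 0), dV p)
        + ∑ p ∈ s₁.filter (fun p => p.1 = 0), dV p := by
    rw [add_comm, Finset.sum_filter_add_sum_filter_not]
  have hsplitD : (∑ p ∈ s₁, dD p)
      = (∑ p ∈ s₂, dD p) + ∑ p ∈ s₁.filter (fun p => ¬ (p.1 + p.2 + 2 ≤ N)), dD p := by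
    rw [hs₂, Finset.sum_filter_add_sum_filter_not]
  have hVzero : (∑ p ∈ s₁.filter (fun p => p.1 = 0), dV p) = 0 := by
    apply Finset.sum_eq_zero
    intro p hp
    simp only [Finset.mem_filter, mem₁] at hp
    have h1 : L p.1 p.2 ≠ 1 := by rw [hp.2]; exact hleft _ (by omega)
    have h2 : L p.1 (p.2+1) ≠ 1 := by rw [hp.2]; exact hleft _ (by omega)
    exact dd_zero_ne_one _ _ h1 h2
  have hDzero : (∑ p ∈ s₁.filter (fun p => ¬ (p.1 + p.2 + 2 ≤ N)), dD p) = 0 := by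
    apply Finset.sum_eq_zero
    intro p hp
    simp only [Finset.mem_filter, mem₁] at hp
    exact dd_zero_ne_zero _ _ (hhyp _ _ (by omega)) (hhyp _ _ (by omega))
  have hbotrow : (∑ p ∈ s₁.filter (fun p => p.2 = 0), dH p)
      = ∑ i ∈ Finset.range N, dH (i, 0) := by
    apply Finset.sum_nbij' (i := fun p => p.1) (j := fun i => (i, 0))
    · intro a ha
      simp only [Finset.mem_filter, mem₁] at ha
      simp only [Finset.mem_range]
      omega
    · intro a ha
      simp only [Finset.mem_range] at ha
      refine Finset.mem_filter.2 ⟨(mem₁ _).2 ?_, rfl⟩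
      show a + 0 + 1 ≤ N
      omega
    · intro a ha
      simp only [Finset.mem_filter, mem₁] at ha
      ext <;> simp <;> omega
    · intro a _; rfl
    · intro a ha
      simp only [Finset.mem_filter, mem₁] at ha
      simp only [hdH]
      rw [ha.2]
  have hbsum : (∑ i ∈ Finset.range N, dH (i, 0)) = 1 := by
    have hcong : ∀ i ∈ Finset.range N, dH (i, 0)
        = (if L i 0 = 1 then (1 : ZMod 2) else 0) + (if L (i+1) 0 = 1 then 1 else 0) := by
      intro i hi
      simp only [Finset.mem_range] at hi
      exact dd_split _ _ (hbot _ (by omega)) (hbot _ (by omega))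
    rw [Finset.sum_congr rfl hcong, tel (fun i => if L i 0 = 1 then 1 else 0) N]
    have h00 : L 0 0 ≠ 1 := hleft 0 (by omega)
    have hN01 : L N 0 = 1 := fin3_eq_one _ (hhyp N 0 (by omega)) (hbot N le_rfl)
    simp [h00, hN01]
  set A := ∑ p ∈ s₁.filter (fun p => p.2 ≠ 0), dH p with hA
  set B := ∑ p ∈ s₁.filter (fun p => p.1 ≠ 0), dV p with hB
  set C := ∑ p ∈ s₂, dD p with hC
  rw [Finset.sum_add_distrib, Finset.sum_add_distrib, Finset.sum_add_distrib,
    Finset.sum_add_distrib, hHre, hVre, hsplitH, hsplitV, hsplitD, hVzero, hDzero,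
    hbotrow, hbsum] at hS0
  rw [← hC] at hS0
  exact one_ne_zero (α := ZMod 2) (by linear_combination hS0 - (A+B+C) * two_zero)

lemma cover3 : ∀ (a b c k : Fin 3), a ≠ b → b ≠ c → a ≠ c → (a = k ∨ b = k ∨ c = k) := by decide

/-- Approximate fixed point theorem for the triangle {x ≥ 0, y ≥ 0, x + y ≤ 2}. -/
lemma tri_afp (G : ℝ × ℝ → ℝ × ℝ)
    (hGc : ContinuousOn G {p : ℝ × ℝ | 0 ≤ p.1 ∧ 0 ≤ p.2 ∧ p.1 + p.2 ≤ 2})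
    (hGm : Set.MapsTo G {p : ℝ × ℝ | 0 ≤ p.1 ∧ 0 ≤ p.2 ∧ p.1 + p.2 ≤ 2}
      {p : ℝ × ℝ | 0 ≤ p.1 ∧ 0 ≤ p.2 ∧ p.1 + p.2 ≤ 2}) :
    ∀ ε > 0, ∃ y ∈ {p : ℝ × ℝ | 0 ≤ p.1 ∧ 0 ≤ p.2 ∧ p.1 + p.2 ≤ 2}, ‖G y - y‖ < ε := by
  set T : Set (ℝ × ℝ) := {p : ℝ × ℝ | 0 ≤ p.1 ∧ 0 ≤ p.2 ∧ p.1 + p.2 ≤ 2} with hT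
  intro ε hε
  -- T is compact
  have hTclosed : IsClosed T := by
    apply IsClosed.inter (isClosed_le continuous_const continuous_fst)
    exact IsClosed.inter (isClosed_le continuous_const continuous_snd)
      (isClosed_le (continuous_fst.add continuous_snd) continuous_const)
  have hTsub : T ⊆ Set.Icc ((0:ℝ), (0:ℝ)) (2, 2) := by
    rintro ⟨x, y⟩ ⟨h1, h2, h3⟩
    simp only [Set.mem_Icc, Prod.mk_le_mk]
    constructor
    · exact ⟨h1, h2⟩
    · constructor <;> [linarith; linarith]
  have hTcomp : IsCompact T := isCompact_Icc.of_isClosed_subset hTclosed hTsub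
  -- the displacement map
  set h : ℝ × ℝ → ℝ × ℝ := fun p => G p - p with hh
  have hhc : ContinuousOn h T := hGc.sub continuousOn_id
  have huc := hTcomp.uniformContinuousOn_of_continuous hhc
  rw [Metric.uniformContinuousOn_iff] at huc
  obtain ⟨δ, hδ, hucδ⟩ := huc ε hε
  by_contra hcon
  push_neg at hcon
  -- choose N
  obtain ⟨N, hNgt⟩ := exists_nat_gt (2/δ)
  have hNpos : (0:ℝ) < N := lt_trans (by positivity) hNgt
  have hN1 : 1 ≤ N := by exact_mod_cast Nat.one_le_iff_ne_zero.2 (by rintro rfl; simp at hNpos)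
  have hmesh : 2 / (N:ℝ) < δ := by
    rw [div_lt_iff₀ hNpos]
    rw [div_lt_iff₀ hδ] at hNgt
    linarith [hNgt]
  -- grid points
  set v : ℕ → ℕ → ℝ × ℝ := fun i j => ((2*i)/N, (2*j)/N) with hv
  have hvT : ∀ i j : ℕ, i + j ≤ N → v i j ∈ T := by
    intro i j hij
    have hsum : (2*(i:ℝ))/(N:ℝ) + (2*(j:ℝ))/(N:ℝ) ≤ 2 := by
      rw [← add_div, div_le_iff₀ hNpos]
      have : (i:ℝ) + j ≤ N := by exact_mod_cast hij
      linarith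
    exact ⟨by show (0:ℝ) ≤ (2*(i:ℝ))/(N:ℝ); positivity,
      by show (0:ℝ) ≤ (2*(j:ℝ))/(N:ℝ); positivity, hsum⟩
  -- labels
  set L : ℕ → ℕ → Fin 3 := fun i j =>
    if (h (v i j)).1 < 0 then 1 else if (h (v i j)).2 < 0 then 2 else 0 with hL
  -- Sperner hypotheses
  have hbot : ∀ i, i ≤ N → L i 0 ≠ 2 := by
    intro i hi
    have hmem : v i 0 ∈ T := hvT i 0 (by omega)
    have hG := hGm hmem
    have h2 : 0 ≤ (h (v i 0)).2 := by
      have hv2 : (v i 0).2 = 0 := by show (2*((0:ℕ):ℝ))/(N:ℝ) = 0; simp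
      show 0 ≤ (G (v i 0)).2 - (v i 0).2
      rw [hv2]
      simpa using hG.2.1
    simp only [hL]
    split
    · exact fun habs => by simp_all
    · rw [if_neg (not_lt.2 h2)]
      decide
  have hleft : ∀ j, j ≤ N → L 0 j ≠ 1 := by
    intro j hj
    have hmem : v 0 j ∈ T := hvT 0 j (by omega)
    have hG := hGm hmem
    have h1 : 0 ≤ (h (v 0 j)).1 := by
      have hv1 : (v 0 j).1 = 0 := by show (2*((0:ℕ):ℝ))/(N:ℝ) = 0; simp
      show 0 ≤ (G (v 0 j)).1 - (v 0 j).1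
      rw [hv1]
      simpa using hG.1
    simp only [hL]
    rw [if_neg (not_lt.2 h1)]
    split <;> decide
  have hhyp : ∀ i j, i + j = N → L i j ≠ 0 := by
    intro i j hij
    have hmem : v i j ∈ T := hvT i j (by omega)
    have hG := hGm hmem
    have hsum : (v i j).1 + (v i j).2 = 2 := by
      show (2*(i:ℝ))/(N:ℝ) + (2*(j:ℝ))/(N:ℝ) = 2
      rw [← add_div, div_eq_iff (ne_of_gt hNpos)]
      have : (i:ℝ) + j = N := by exact_mod_cast hij
      linarith
    simp only [hL]
    split
    · decide
    · split
      · decide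
      · rename_i hx hy
        intro _
        push_neg at hx hy
        have hle : (h (v i j)).1 + (h (v i j)).2 ≤ 0 := by
          simp only [hh, Prod.fst_sub, Prod.snd_sub]
          have := hG.2.2
          linarith
        have hx0 : (h (v i j)).1 = 0 := by linarith
        have hy0 : (h (v i j)).2 = 0 := by linarith
        have hzero : G (v i j) - v i j = 0 := by
          have e1 : (G (v i j) - v i j).1 = 0 := hx0
          have e2 : (G (v i j) - v i j).2 = 0 := hy0
          exact Prod.ext e1 e2
        have hcc := hcon (v i j) hmem
        rw [hzero, norm_zero] at hcc
        linarith
  have hcoord : ∀ a b : ℕ, a ≤ b + 1 → b ≤ a + 1 →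
      |(2*(a:ℝ))/N - (2*(b:ℝ))/N| ≤ 2/N := by
    intro a b ha hb
    have c1 : (a:ℝ) ≤ (b:ℝ) + 1 := by exact_mod_cast ha
    have c2 : (b:ℝ) ≤ (a:ℝ) + 1 := by exact_mod_cast hb
    have habs : |2*(a:ℝ) - 2*(b:ℝ)| ≤ 2 := by
      rw [abs_le]; constructor <;> linarith
    calc |(2*(a:ℝ))/N - (2*(b:ℝ))/N| = |2*(a:ℝ) - 2*(b:ℝ)|/N := by
          rw [← sub_div, abs_div, abs_of_pos hNpos]
      _ ≤ 2/N := by gcongr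
  obtain ⟨i, j, hij1, hcase⟩ := sperner N hN1 L hbot hleft hhyp
  -- common machinery
  have key : ∀ P : Fin 3 → ℕ × ℕ,
      (∀ m, ((P m).1 = i ∨ (P m).1 = i+1) ∧ ((P m).2 = j ∨ (P m).2 = j+1)) →
      (∀ m, (P m).1 + (P m).2 ≤ N) →
      L (P 0).1 (P 0).2 ≠ L (P 1).1 (P 1).2 →
      L (P 1).1 (P 1).2 ≠ L (P 2).1 (P 2).2 →
      L (P 0).1 (P 0).2 ≠ L (P 2).1 (P 2).2 → False := by
    intro P hcell hdom hab hbc hac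
    have hdist : ∀ m m' : Fin 3, dist (v (P m).1 (P m).2) (v (P m').1 (P m').2) < δ := by
      intro m m'
      rw [Prod.dist_eq]
      have h1 := hcoord (P m).1 (P m').1
        (by rcases (hcell m).1 with h|h <;> rcases (hcell m').1 with h'|h' <;> omega)
        (by rcases (hcell m).1 with h|h <;> rcases (hcell m').1 with h'|h' <;> omega)
      have h2 := hcoord (P m).2 (P m').2
        (by rcases (hcell m).2 with h|h <;> rcases (hcell m').2 with h'|h' <;> omega)
        (by rcases (hcell m).2 with h|h <;> rcases (hcell m').2 with h'|h' <;> omega)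
      have e1 : dist (v (P m).1 (P m).2).1 (v (P m').1 (P m').2).1
          = |(2*((P m).1:ℝ))/N - (2*((P m').1:ℝ))/N| := by
        rw [Real.dist_eq]
      have e2 : dist (v (P m).1 (P m).2).2 (v (P m').1 (P m').2).2
          = |(2*((P m).2:ℝ))/N - (2*((P m').2:ℝ))/N| := by
        rw [Real.dist_eq]
      rw [e1, e2]
      exact lt_of_le_of_lt (max_le h1 h2) hmesh
    have Lfacts : ∀ a b : ℕ,
        (L a b = 1 → (h (v a b)).1 < 0) ∧
        (L a b = 2 → 0 ≤ (h (v a b)).1 ∧ (h (v a b)).2 < 0) ∧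
        (L a b = 0 → 0 ≤ (h (v a b)).1 ∧ 0 ≤ (h (v a b)).2) := by
      intro a b
      simp only [hL]
      split
      · rename_i hc1
        exact ⟨fun _ => hc1, fun habs => absurd habs (by decide),
          fun habs => absurd habs (by decide)⟩
      · rename_i hc1
        split
        · rename_i hc2
          exact ⟨fun habs => absurd habs (by decide), fun _ => ⟨not_lt.1 hc1, hc2⟩,
            fun habs => absurd habs (by decide)⟩
        · rename_i hc2
          exact ⟨fun habs => absurd habs (by decide), fun habs => absurd habs (by decide),
            fun _ => ⟨not_lt.1 hc1, not_lt.1 hc2⟩⟩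
    have pick : ∀ k : Fin 3, ∃ m : Fin 3, L (P m).1 (P m).2 = k := by
      intro k
      rcases cover3 _ _ _ k hab hbc hac with hk | hk | hk
      exacts [⟨0, hk⟩, ⟨1, hk⟩, ⟨2, hk⟩]
    obtain ⟨m0, hm0⟩ := pick 0
    obtain ⟨m1, hm1⟩ := pick 1
    obtain ⟨m2, hm2⟩ := pick 2
    have hp0T : v (P m0).1 (P m0).2 ∈ T := hvT _ _ (hdom m0)
    have hp1T : v (P m1).1 (P m1).2 ∈ T := hvT _ _ (hdom m1)
    have hp2T : v (P m2).1 (P m2).2 ∈ T := hvT _ _ (hdom m2)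
    have h1neg : (h (v (P m1).1 (P m1).2)).1 < 0 := (Lfacts _ _).1 hm1
    have h2neg : (h (v (P m2).1 (P m2).2)).2 < 0 := ((Lfacts _ _).2.1 hm2).2
    have h0pos : 0 ≤ (h (v (P m0).1 (P m0).2)).1 ∧ 0 ≤ (h (v (P m0).1 (P m0).2)).2 :=
      (Lfacts _ _).2.2 hm0
    have hbig : ε ≤ ‖h (v (P m0).1 (P m0).2)‖ := hcon _ hp0T
    have hnorm : ‖h (v (P m0).1 (P m0).2)‖
        = max |(h (v (P m0).1 (P m0).2)).1| |(h (v (P m0).1 (P m0).2)).2| := rfl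
    have hor : ε ≤ (h (v (P m0).1 (P m0).2)).1 ∨ ε ≤ (h (v (P m0).1 (P m0).2)).2 := by
      rw [hnorm] at hbig
      rcases le_max_iff.1 hbig with hc | hc
      · left; rwa [abs_of_nonneg h0pos.1] at hc
      · right; rwa [abs_of_nonneg h0pos.2] at hc
    rcases hor with hbig1 | hbig2
    · have hd := hucδ _ hp0T _ hp1T (hdist m0 m1)
      have hle : |(h (v (P m0).1 (P m0).2)).1 - (h (v (P m1).1 (P m1).2)).1|
          ≤ dist (h (v (P m0).1 (P m0).2)) (h (v (P m1).1 (P m1).2)) := by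
        rw [Prod.dist_eq]
        exact le_trans (le_of_eq (Real.dist_eq _ _).symm) (le_max_left _ _)
      have hge : ε ≤ |(h (v (P m0).1 (P m0).2)).1 - (h (v (P m1).1 (P m1).2)).1| := by
        rw [abs_of_nonneg (by linarith)]
        linarith
      linarith
    · have hd := hucδ _ hp0T _ hp2T (hdist m0 m2)
      have hle : |(h (v (P m0).1 (P m0).2)).2 - (h (v (P m2).1 (P m2).2)).2|
          ≤ dist (h (v (P m0).1 (P m0).2)) (h (v (P m2).1 (P m2).2)) := by
        rw [Prod.dist_eq]
        exact le_trans (le_of_eq (Real.dist_eq _ _).symm) (le_max_right _ _)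
      have hge : ε ≤ |(h (v (P m0).1 (P m0).2)).2 - (h (v (P m2).1 (P m2).2)).2| := by
        rw [abs_of_nonneg (by linarith)]
        linarith
      linarith
  rcases hcase with ⟨h1, h2, h3⟩ | ⟨hij2, h1, h2, h3⟩
  · exact key ![(i,j), (i+1,j), (i,j+1)]
      (by intro m; fin_cases m <;> refine ⟨?_, ?_⟩ <;> simp <;> omega)
      (by intro m; fin_cases m <;> simp <;> omega)
      (by simpa using h1) (by simpa using h2) (by simpa using h3)
  · exact key ![(i+1,j), (i,j+1), (i+1,j+1)]
      (by intro m; fin_cases m <;> refine ⟨?_, ?_⟩ <;> simp <;> omega)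
      (by intro m; fin_cases m <;> simp <;> omega)
      (by simpa using h1) (by simpa using h2) (by simpa using h3)

lemma clamp_near (t s : ℝ) (h0 : 0 ≤ s) (h1 : s ≤ 1) : |min 1 (max 0 t) - t| ≤ |s - t| := by
  rcases le_total t 0 with ht | ht
  · rw [max_eq_left ht, min_eq_right (by norm_num : (0:ℝ) ≤ 1)]
    rw [abs_of_nonneg (by linarith), abs_of_nonneg (by linarith)]
    linarith
  · rcases le_total t 1 with ht1 | ht1
    · rw [max_eq_right ht, min_eq_right ht1]
      simp [abs_nonneg]
    · rw [max_eq_right ht, min_eq_left ht1]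
      rw [abs_of_nonpos (by linarith), abs_of_nonpos (by linarith)]
      linarith

/-- Approximate fixed point theorem for the unit square: for continuous
`f : [0,1]² → [0,1]²` and any `ε > 0` there is `x` with `‖f x − x‖∞ < ε`.
(The norm on `ℝ × ℝ` is the sup norm.) -/
theorem stmt_10 (f : ℝ × ℝ → ℝ × ℝ)
    (hfc : ContinuousOn f (Set.Icc ((0:ℝ), (0:ℝ)) (1, 1)))
    (hfm : Set.MapsTo f (Set.Icc ((0:ℝ), (0:ℝ)) (1, 1)) (Set.Icc ((0:ℝ), (0:ℝ)) (1, 1))) :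
    ∀ ε > 0, ∃ x ∈ Set.Icc ((0:ℝ), (0:ℝ)) (1, 1), ‖f x - x‖ < ε := by
  intro ε hε
  set Q : Set (ℝ × ℝ) := Set.Icc ((0:ℝ), (0:ℝ)) (1, 1) with hQ
  set r : ℝ × ℝ → ℝ × ℝ := fun p => (min 1 (max 0 p.1), min 1 (max 0 p.2)) with hr
  have hrc : Continuous r := by
    apply Continuous.prodMk
    · exact continuous_const.min (continuous_const.max continuous_fst)
    · exact continuous_const.min (continuous_const.max continuous_snd)
  have hrQ : ∀ p : ℝ × ℝ, r p ∈ Q := by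
    intro p
    rw [hQ, Set.mem_Icc]
    constructor
    · constructor
      · exact le_min (by norm_num) (le_max_left 0 p.1)
      · exact le_min (by norm_num) (le_max_left 0 p.2)
    · exact ⟨min_le_left _ _, min_le_left _ _⟩
  have hQT : Q ⊆ {p : ℝ × ℝ | 0 ≤ p.1 ∧ 0 ≤ p.2 ∧ p.1 + p.2 ≤ 2} := by
    rintro ⟨x, y⟩ hxy
    simp only [hQ, Set.mem_Icc, Prod.mk_le_mk] at hxy
    obtain ⟨⟨h1, h2⟩, ⟨h3, h4⟩⟩ := hxy
    exact ⟨h1, h2, by linarith⟩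
  set F : ℝ × ℝ → ℝ × ℝ := f ∘ r with hF
  have hFc : ContinuousOn F {p : ℝ × ℝ | 0 ≤ p.1 ∧ 0 ≤ p.2 ∧ p.1 + p.2 ≤ 2} :=
    hfc.comp hrc.continuousOn (fun p _ => hrQ p)
  have hFm : Set.MapsTo F {p : ℝ × ℝ | 0 ≤ p.1 ∧ 0 ≤ p.2 ∧ p.1 + p.2 ≤ 2}
      {p : ℝ × ℝ | 0 ≤ p.1 ∧ 0 ≤ p.2 ∧ p.1 + p.2 ≤ 2} :=
    fun p _ => hQT (hfm (hrQ p))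
  obtain ⟨y, hyT, hy⟩ := tri_afp F hFc hFm (ε/2) (by linarith)
  refine ⟨r y, hrQ y, ?_⟩
  have hFyQ : F y ∈ Q := hfm (hrQ y)
  have hFyb : 0 ≤ (F y).1 ∧ (F y).1 ≤ 1 ∧ 0 ≤ (F y).2 ∧ (F y).2 ≤ 1 := by
    rw [hQ, Set.mem_Icc] at hFyQ
    exact ⟨hFyQ.1.1, hFyQ.2.1, hFyQ.1.2, hFyQ.2.2⟩
  have hnear : ‖r y - y‖ ≤ ‖F y - y‖ := by
    rw [Prod.norm_def, Prod.norm_def]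
    apply max_le_max
    · show ‖(r y - y).1‖ ≤ ‖(F y - y).1‖
      rw [Prod.fst_sub, Prod.fst_sub, Real.norm_eq_abs, Real.norm_eq_abs]
      exact clamp_near y.1 (F y).1 hFyb.1 hFyb.2.1
    · show ‖(r y - y).2‖ ≤ ‖(F y - y).2‖
      rw [Prod.snd_sub, Prod.snd_sub, Real.norm_eq_abs, Real.norm_eq_abs]
      exact clamp_near y.2 (F y).2 hFyb.2.2.1 hFyb.2.2.2
  have hsplit : f (r y) - r y = (F y - y) + (y - r y) := by
    show F y - r y = (F y - y) + (y - r y)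
    abel
  calc ‖f (r y) - r y‖ = ‖(F y - y) + (y - r y)‖ := by rw [hsplit]
    _ ≤ ‖F y - y‖ + ‖y - r y‖ := norm_add_le _ _
    _ = ‖F y - y‖ + ‖r y - y‖ := by rw [norm_sub_rev y (r y)]
    _ ≤ ‖F y - y‖ + ‖F y - y‖ := by linarith
    _ < ε := by linarith
end

section
/- Let f : [0,1]² → [0,1]² be continuous, let ε > 0, and let δ > 0 witness uniform continuity (‖x − x'‖_∞ < δ implies ‖f(x) − f(x')‖_∞ < ε), with δ < ε. Fix k with 1/k < δ. Then no two adjacent lattice points z, z' ∈ B_k (‖z − z'‖_∞ = 1, comparable) can satisfy both f₁(z/k) − z₁/k > ε and z'₁/k − f₁(z'/k) > ε. -/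
/-- Non-contiguity of `H⁺` and `H⁻`: with `f : [0,1]² → [0,1]²`, `ε > 0`, a uniform
continuity modulus `δ < ε` and `1/k < δ`, no two adjacent lattice points `z, z'` of the
board can satisfy both `f₁(z/k) − z₁/k > ε` and `z'₁/k − f₁(z'/k) > ε`.
(The norm on `ℝ × ℝ` is the sup norm.) -/
theorem stmt_12 (f : ℝ × ℝ → ℝ × ℝ)
    (hfm : Set.MapsTo f (Set.Icc ((0:ℝ), (0:ℝ)) (1, 1)) (Set.Icc ((0:ℝ), (0:ℝ)) (1, 1)))
    (ε δ : ℝ) (hε : 0 < ε) (hδ : 0 < δ) (hδε : δ < ε)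
    (hunif : ∀ x ∈ Set.Icc ((0:ℝ), (0:ℝ)) (1, 1), ∀ x' ∈ Set.Icc ((0:ℝ), (0:ℝ)) (1, 1),
      ‖x - x'‖ < δ → ‖f x - f x'‖ < ε)
    (k : ℕ) (hk : 0 < k) (hkδ : 1 / (k : ℝ) < δ)
    (z z' : ℤ × ℤ) (hz : z ∈ hexBoard k) (hz' : z' ∈ hexBoard k)
    (hadj : hexAdj z z') :
    ¬ ((f ((z.1 : ℝ) / k, (z.2 : ℝ) / k)).1 - (z.1 : ℝ) / k > ε ∧
       (z'.1 : ℝ) / k - (f ((z'.1 : ℝ) / k, (z'.2 : ℝ) / k)).1 > ε) := by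

  rintro ⟨h1, h2⟩
  have hk' : (0:ℝ) < k := by exact_mod_cast hk
  obtain ⟨hz1, hz2, hz3, hz4⟩ := hz
  obtain ⟨hw1, hw2, hw3, hw4⟩ := hz'
  have hmem : ∀ w : ℤ × ℤ, 1 ≤ w.1 → w.1 ≤ (k:ℤ) → 1 ≤ w.2 → w.2 ≤ (k:ℤ) →
      ((w.1:ℝ)/k, (w.2:ℝ)/k) ∈ Set.Icc ((0:ℝ), (0:ℝ)) (1, 1) := by
    intro w a b c d
    refine ⟨⟨?_, ?_⟩, ?_, ?_⟩ <;> simp only []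
    · exact div_nonneg (by exact_mod_cast le_trans zero_le_one (by exact_mod_cast a)) hk'.le
    · exact div_nonneg (by exact_mod_cast le_trans zero_le_one (by exact_mod_cast c)) hk'.le
    · exact (div_le_one hk').mpr (by exact_mod_cast b)
    · exact (div_le_one hk').mpr (by exact_mod_cast d)
  have hx := hmem z hz1 hz2 hz3 hz4
  have hx' := hmem z' hw1 hw2 hw3 hw4
  have had1 : |z.1 - z'.1| ≤ 1 := le_of_max_le_left hadj.1.le
  have had2 : |z.2 - z'.2| ≤ 1 := le_of_max_le_right hadj.1.le
  have hb : ∀ a b : ℤ, |a - b| ≤ 1 → |(a:ℝ)/k - (b:ℝ)/k| ≤ 1/k := by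
    intro a b hab
    rw [div_sub_div_same, abs_div, abs_of_pos hk', div_le_div_iff_of_pos_right hk']
    exact_mod_cast (by exact_mod_cast hab : |(a:ℝ) - b| ≤ 1)
  have hnorm : ‖((z.1:ℝ)/k, (z.2:ℝ)/k) - ((z'.1:ℝ)/k, (z'.2:ℝ)/k)‖ < δ := by
    rw [Prod.norm_def]
    apply max_lt <;> simp only [Prod.fst_sub, Prod.snd_sub, Real.norm_eq_abs]
    · exact lt_of_le_of_lt (hb _ _ had1) hkδ
    · exact lt_of_le_of_lt (hb _ _ had2) hkδ
  have hf := hunif _ hx _ hx' hnorm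
  have hfst : |(f ((z.1:ℝ)/k, (z.2:ℝ)/k)).1 - (f ((z'.1:ℝ)/k, (z'.2:ℝ)/k)).1| < ε := by
    refine lt_of_le_of_lt ?_ hf
    rw [Prod.norm_def]
    exact le_max_left _ _
  have hd1 : (z'.1:ℝ)/k - (z.1:ℝ)/k ≤ 1/k := by
    have := hb z'.1 z.1 (by rwa [abs_sub_comm])
    exact le_trans (le_abs_self _) this
  have habs := abs_lt.mp hfst
  linarith [habs.1, habs.2]
end
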